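/- Let D ⊂ ℝⁿ be an open set and D₁ ⊆ D measurable. Let h : [0,∞) → [0,∞) be continuous, strictly increasing, with h(0) = 0 and h(t) → ∞ as t → ∞; let g be its inverse, F(a) = ∫_0^a h, F*(b) = ∫_0^b g, and define V(p) = h(|p|)p/|p| for p ≠ 0, V(0) = 0. Let u, v : D → ℝ be locally Lipschitz with F(|∇u|), F(|∇v|), F*(h(|∇v|)) integrable on D₁. If ∫_{D₁} ⟨V(∇v), ∇v⟩ dx ≤ ∫_{D₁} ⟨V(∇v), ∇u⟩ dx, then ∫_{D₁} F(|∇v|) dx ≤ ∫_{D₁} F(|∇u|) dx. -/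

import Mathlib

/-!
Young's inequality `b h(a) ≤ F(b) + F*(h(a))`, with equality at `b = a`, gives pointwise
`⟪V(∇v), ∇u⟫ ≤ F(|∇u|) + F*(h(|∇v|))` and `⟪V(∇v), ∇v⟫ = F(|∇v|) + F*(h(|∇v|))`. Integrating
over `D₁` and cancelling `∫ F*(h(|∇v|))` against the hypothesis gives the claim. If the cross
term is not integrable its integral is `0`, and the claim follows from `F, F* ≥ 0`.
-/

open Set Filter MeasureTheory
open scoped RealInnerProductSpace Topology Classical
noncomputable section

/-- The flux field `V(p) = h(|p|) p/|p|` for `p ≠ 0`, `V(0) = 0`. -/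
def flux {n : ℕ} (h : ℝ → ℝ) (p : EuclideanSpace ℝ (Fin n)) : EuclideanSpace ℝ (Fin n) :=
  if p = 0 then 0 else (h ‖p‖ / ‖p‖) • p

section Young

variable {h g : ℝ → ℝ}

theorem StrictMonoOn.monotoneOn_rightInverse (hmono : StrictMonoOn h (Ici 0))
    (hg : ∀ t ∈ Ici (0:ℝ), 0 ≤ g t ∧ h (g t) = t) : MonotoneOn g (Ici 0) := by
  intro s hs t ht hst
  rw [← hmono.le_iff_le (hg s hs).1 (hg t ht).1, (hg s hs).2, (hg t ht).2]
  exact hst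

/-- Swapping coordinates turns the region above the graph of `h` and below the level `h a` into
the region under the graph of its inverse `g`; comparing areas gives Young's equality. -/
theorem preimage_swap_regionBetween_eq (hmono : StrictMonoOn h (Ici 0))
    (hnonneg : ∀ t ∈ Ici (0:ℝ), 0 ≤ h t) (hg : ∀ t ∈ Ici (0:ℝ), 0 ≤ g t ∧ h (g t) = t)
    {a : ℝ} (ha : 0 ≤ a) :
    Prod.swap ⁻¹' regionBetween h (fun _ ↦ h a) (Ioo 0 a) =
      regionBetween (fun _ ↦ 0) g (Ioo 0 (h a)) := by
  ext ⟨τ, t⟩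
  simp only [regionBetween, mem_preimage, Prod.swap_prod_mk, mem_ofPred_eq, mem_Ioo]
  constructor
  · rintro ⟨⟨ht0, hta⟩, hhtτ, hτa⟩
    have hτ0 : 0 < τ := (hnonneg t ht0.le).trans_lt hhtτ
    obtain ⟨hgτ0, hhgτ⟩ := hg τ hτ0.le
    refine ⟨⟨hτ0, hτa⟩, ht0, ?_⟩
    rw [← hmono.lt_iff_lt ht0.le hgτ0, hhgτ]
    exact hhtτ
  · rintro ⟨⟨hτ0, hτa⟩, ht0, htgτ⟩
    obtain ⟨hgτ0, hhgτ⟩ := hg τ hτ0.le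
    have hhtτ : h t < τ := hhgτ ▸ hmono ht0.le hgτ0 htgτ
    exact ⟨⟨ht0, (hmono.lt_iff_lt ht0.le ha).mp (hhtτ.trans hτa)⟩, hhtτ, hτa⟩

theorem integral_add_integral_inv_eq_mul (hmono : StrictMonoOn h (Ici 0))
    (hnonneg : ∀ t ∈ Ici (0:ℝ), 0 ≤ h t) (hg : ∀ t ∈ Ici (0:ℝ), 0 ≤ g t ∧ h (g t) = t)
    {a : ℝ} (ha : 0 ≤ a) :
    (∫ τ in (0:ℝ)..a, h τ) + (∫ τ in (0:ℝ)..h a, g τ) = a * h a := by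
  have hha : 0 ≤ h a := hnonneg a ha
  have h_int : IntegrableOn h (Ioo 0 a) :=
    (hmono.monotoneOn.mono Icc_subset_Ici_self |>.integrableOn_isCompact isCompact_Icc).mono_set
      Ioo_subset_Icc_self
  have g_int : IntegrableOn g (Ioo 0 (h a)) :=
    ((hmono.monotoneOn_rightInverse hg).mono Icc_subset_Ici_self
      |>.integrableOn_isCompact isCompact_Icc).mono_set Ioo_subset_Icc_self
  have hvol := (Measure.measurePreserving_swap (μ := volume) (ν := volume)).measure_preimage_emb
    MeasurableEquiv.prodComm.measurableEmbedding (regionBetween h (fun _ ↦ h a) (Ioo 0 a))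
  rw [preimage_swap_regionBetween_eq hmono hnonneg hg ha,
    volume_regionBetween_eq_integral (integrableOn_const measure_Ioo_lt_top.ne) g_int
      measurableSet_Ioo fun τ hτ ↦ (hg τ hτ.1.le).1,
    volume_regionBetween_eq_integral h_int (integrableOn_const measure_Ioo_lt_top.ne)
      measurableSet_Ioo fun t ht ↦ hmono.monotoneOn ht.1.le ha ht.2.le] at hvol
  simp only [Pi.sub_apply, sub_zero] at hvol
  rw [ENNReal.ofReal_eq_ofReal_iff
      (setIntegral_nonneg measurableSet_Ioo fun τ hτ ↦ (hg τ hτ.1.le).1)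
      (setIntegral_nonneg measurableSet_Ioo fun t ht ↦
        sub_nonneg.2 (hmono.monotoneOn ht.1.le ha ht.2.le)),
    integral_sub (integrableOn_const (C := h a) measure_Ioo_lt_top.ne) h_int, setIntegral_const,
    Real.volume_real_Ioo_of_le ha, smul_eq_mul] at hvol
  rw [intervalIntegral.integral_of_le ha, intervalIntegral.integral_of_le hha,
    integral_Ioc_eq_integral_Ioo, integral_Ioc_eq_integral_Ioo, hvol]
  ring

theorem MonotoneOn.mul_sub_le_intervalIntegral {a b : ℝ} (hmono : MonotoneOn h (uIcc a b)) :
    h a * (b - a) ≤ ∫ τ in a..b, h τ := by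
  rcases le_total a b with hab | hba
  · have hle : ∫ _ in a..b, h a ≤ ∫ τ in a..b, h τ :=
      intervalIntegral.integral_mono_on hab intervalIntegrable_const
        hmono.intervalIntegrable fun x hx ↦ hmono left_mem_uIcc (Icc_subset_uIcc hx) hx.1
    rwa [intervalIntegral.integral_const, smul_eq_mul, mul_comm] at hle
  · have hle : ∫ τ in b..a, h τ ≤ ∫ _ in b..a, h a :=
      intervalIntegral.integral_mono_on hba hmono.intervalIntegrable.symm
        intervalIntegrable_const fun x hx ↦ hmono (Icc_subset_uIcc' hx) left_mem_uIcc hx.2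
    rw [intervalIntegral.integral_const, smul_eq_mul] at hle
    rw [intervalIntegral.integral_symm]
    linarith

-- Young's inequality: the tangent-line bound for the convex primitive of `h` plus equality.
theorem mul_le_integral_add_integral_inv (hmono : StrictMonoOn h (Ici 0))
    (hnonneg : ∀ t ∈ Ici (0:ℝ), 0 ≤ h t) (hg : ∀ t ∈ Ici (0:ℝ), 0 ≤ g t ∧ h (g t) = t)
    {a b : ℝ} (ha : 0 ≤ a) (hb : 0 ≤ b) :
    h a * b ≤ (∫ τ in (0:ℝ)..b, h τ) + (∫ τ in (0:ℝ)..h a, g τ) := by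
  have hmono_on : ∀ c d : ℝ, 0 ≤ c → 0 ≤ d → MonotoneOn h (uIcc c d) := fun c d hc hd ↦
    hmono.monotoneOn.mono fun x hx ↦ (le_min hc hd).trans hx.1
  have htangent := (hmono_on a b ha hb).mul_sub_le_intervalIntegral
  rw [← intervalIntegral.integral_interval_sub_left (hmono_on 0 b le_rfl hb).intervalIntegrable
    (hmono_on 0 a le_rfl ha).intervalIntegrable] at htangent
  linarith [integral_add_integral_inv_eq_mul hmono hnonneg hg ha]

end Young

section Flux

variable {n : ℕ} {h : ℝ → ℝ}

theorem inner_flux_self (p : EuclideanSpace ℝ (Fin n)) : ⟪flux h p, p⟫ = h ‖p‖ * ‖p‖ := by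
  by_cases hp : p = 0
  · simp [flux, hp]
  · have hnp : ‖p‖ ≠ 0 := norm_ne_zero_iff.2 hp
    rw [flux, if_neg hp, real_inner_smul_left, real_inner_self_eq_norm_mul_norm]
    field_simp

theorem inner_flux_le {p : EuclideanSpace ℝ (Fin n)} (hp : 0 ≤ h ‖p‖)
    (q : EuclideanSpace ℝ (Fin n)) : ⟪flux h p, q⟫ ≤ h ‖p‖ * ‖q‖ := by
  by_cases hp0 : p = 0
  · simpa [flux, hp0] using mul_nonneg hp (norm_nonneg q)
  · have hnp : ‖p‖ ≠ 0 := norm_ne_zero_iff.2 hp0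
    rw [flux, if_neg hp0, real_inner_smul_left]
    calc h ‖p‖ / ‖p‖ * ⟪p, q⟫ ≤ h ‖p‖ / ‖p‖ * (‖p‖ * ‖q‖) :=
          mul_le_mul_of_nonneg_left (real_inner_le_norm p q) (by positivity)
      _ = h ‖p‖ * ‖q‖ := by field_simp

variable {g : ℝ → ℝ}

theorem inner_flux_self_eq_integral_add_integral (hmono : StrictMonoOn h (Ici 0))
    (hnonneg : ∀ t ∈ Ici (0:ℝ), 0 ≤ h t) (hg : ∀ t ∈ Ici (0:ℝ), 0 ≤ g t ∧ h (g t) = t)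
    (p : EuclideanSpace ℝ (Fin n)) :
    ⟪flux h p, p⟫ = (∫ τ in (0:ℝ)..‖p‖, h τ) + ∫ τ in (0:ℝ)..h ‖p‖, g τ := by
  rw [inner_flux_self, integral_add_integral_inv_eq_mul hmono hnonneg hg (norm_nonneg p), mul_comm]

theorem inner_flux_le_integral_add_integral (hmono : StrictMonoOn h (Ici 0))
    (hnonneg : ∀ t ∈ Ici (0:ℝ), 0 ≤ h t) (hg : ∀ t ∈ Ici (0:ℝ), 0 ≤ g t ∧ h (g t) = t)
    (p q : EuclideanSpace ℝ (Fin n)) :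
    ⟪flux h p, q⟫ ≤ (∫ τ in (0:ℝ)..‖q‖, h τ) + ∫ τ in (0:ℝ)..h ‖p‖, g τ :=
  (inner_flux_le (hnonneg _ (norm_nonneg p)) q).trans <|
    mul_le_integral_add_integral_inv hmono hnonneg hg (norm_nonneg p) (norm_nonneg q)

end Flux

theorem integral_le_integral_of_integral_add_le {α : Type*} [MeasurableSpace α]
    {μ : Measure α} {e f s b : α → ℝ} (he : Integrable e μ) (hf : Integrable f μ)
    (hs : Integrable s μ) (hf_nonneg : 0 ≤ᵐ[μ] f) (hs_nonneg : 0 ≤ᵐ[μ] s)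
    (hb : b ≤ᵐ[μ] f + s) (hle : ∫ x, e x + s x ∂μ ≤ ∫ x, b x ∂μ) :
    ∫ x, e x ∂μ ≤ ∫ x, f x ∂μ := by
  rw [integral_add he hs] at hle
  by_cases hb_int : Integrable b μ
  · have hb_le := integral_mono_ae hb_int (hf.add hs) hb
    rw [integral_add' hf hs] at hb_le
    linarith
  · -- then `∫ b = 0` by convention, and `hle` forces `∫ e ≤ 0`
    rw [integral_undef hb_int] at hle
    linarith [integral_nonneg_of_ae hf_nonneg, integral_nonneg_of_ae hs_nonneg]

theorem statement15_general {n : ℕ} (D₁ : Set (EuclideanSpace ℝ (Fin n)))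
    (h : ℝ → ℝ)
    (hmono : StrictMonoOn h (Ici 0))
    (hnonneg : ∀ t ∈ Ici (0:ℝ), 0 ≤ h t)
    (g : ℝ → ℝ)
    (hg2 : ∀ t ∈ Ici (0:ℝ), 0 ≤ g t ∧ h (g t) = t)
    (u v : EuclideanSpace ℝ (Fin n) → ℝ)
    (hFu_int : IntegrableOn (fun x => ∫ τ in (0:ℝ)..‖gradient u x‖, h τ) D₁)
    (hFv_int : IntegrableOn (fun x => ∫ τ in (0:ℝ)..‖gradient v x‖, h τ) D₁)
    (hFsv_int : IntegrableOn (fun x => ∫ τ in (0:ℝ)..h ‖gradient v x‖, g τ) D₁)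
    (hkey : ∫ x in D₁, ⟪flux h (gradient v x), gradient v x⟫ ≤
      ∫ x in D₁, ⟪flux h (gradient v x), gradient u x⟫) :
    ∫ x in D₁, (∫ τ in (0:ℝ)..‖gradient v x‖, h τ) ≤
      ∫ x in D₁, (∫ τ in (0:ℝ)..‖gradient u x‖, h τ) := by
  refine integral_le_integral_of_integral_add_le hFv_int hFu_int hFsv_int
    (ae_of_all _ fun x ↦ intervalIntegral.integral_nonneg (norm_nonneg _) fun τ hτ ↦
      hnonneg τ hτ.1)
    (ae_of_all _ fun x ↦ intervalIntegral.integral_nonneg (hnonneg _ (norm_nonneg _))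
      fun τ hτ ↦ (hg2 τ hτ.1).1)
    (ae_of_all _ fun x ↦
      inner_flux_le_integral_add_integral hmono hnonneg hg2 (gradient v x) (gradient u x)) ?_
  simpa only [inner_flux_self_eq_integral_add_integral hmono hnonneg hg2] using hkey

/-- (Energy comparison step in the proof of the comparison principle.)
Let `D ⊂ ℝⁿ` be open and `D₁ ⊆ D` measurable. Let `h : [0,∞) → [0,∞)` be continuous,
strictly increasing, `h(0) = 0`, `h(t) → ∞`, with inverse `g`; `F(a) = ∫_0^a h`,
`F*(b) = ∫_0^b g`, `V(p) = h(|p|)p/|p|` (`V(0) = 0`). If `u, v` are locally Lipschitz on `D`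
with `F(|∇u|)`, `F(|∇v|)`, `F*(h(|∇v|))` integrable on `D₁`, and
`∫_{D₁} ⟨V(∇v), ∇v⟩ ≤ ∫_{D₁} ⟨V(∇v), ∇u⟩`, then
`∫_{D₁} F(|∇v|) ≤ ∫_{D₁} F(|∇u|)`. -/
theorem statement15 {n : ℕ} (D D₁ : Set (EuclideanSpace ℝ (Fin n)))
    (hD : IsOpen D) (hD₁ : MeasurableSet D₁) (hsub : D₁ ⊆ D)
    (h : ℝ → ℝ) (hcont : ContinuousOn h (Ici 0))
    (hmono : StrictMonoOn h (Ici 0)) (h0 : h 0 = 0)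
    (hnonneg : ∀ t ∈ Ici (0:ℝ), 0 ≤ h t)
    (htop : Tendsto h atTop atTop)
    (g : ℝ → ℝ)
    (hg1 : ∀ t ∈ Ici (0:ℝ), g (h t) = t)
    (hg2 : ∀ t ∈ Ici (0:ℝ), 0 ≤ g t ∧ h (g t) = t)
    (u v : EuclideanSpace ℝ (Fin n) → ℝ)
    (hu_lip : ∀ x ∈ D, ∃ K : NNReal, ∃ s ∈ 𝓝 x, LipschitzOnWith K u s)
    (hv_lip : ∀ x ∈ D, ∃ K : NNReal, ∃ s ∈ 𝓝 x, LipschitzOnWith K v s)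
    (hFu_int : IntegrableOn (fun x => ∫ τ in (0:ℝ)..‖gradient u x‖, h τ) D₁)
    (hFv_int : IntegrableOn (fun x => ∫ τ in (0:ℝ)..‖gradient v x‖, h τ) D₁)
    (hFsv_int : IntegrableOn (fun x => ∫ τ in (0:ℝ)..h ‖gradient v x‖, g τ) D₁)
    (hkey : ∫ x in D₁, ⟪flux h (gradient v x), gradient v x⟫ ≤
      ∫ x in D₁, ⟪flux h (gradient v x), gradient u x⟫) :
    ∫ x in D₁, (∫ τ in (0:ℝ)..‖gradient v x‖, h τ) ≤
      ∫ x in D₁, (∫ τ in (0:ℝ)..‖gradient u x‖, h τ) :=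
  statement15_general D₁ h hmono hnonneg g hg2 u v hFu_int hFv_int hFsv_int hkey
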